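/- arXiv:2404.13429 — 4 statements merged into one kernel-verified Lean document; each statement's English description precedes it below -/
import Mathlib

section
/- Conversely, suppose the eigenspace of M for the eigenvalue 1 is exactly span{v} with v ≠ 0, and w is a left nullvector of M - I normalized so that wᵀ v = 1. Then Γ := M - I is a bijection on Im Q where Q := I - v wᵀ: Γ maps {x : wᵀ x = 0} injectively onto itself. -/
open Matrix

noncomputable def wlin {n : ℕ} (w : Fin n → ℝ) : (Fin n → ℝ) →ₗ[ℝ] ℝ where
  toFun x := w ⬝ᵥ x
  map_add' x y := dotProduct_add _ _ _
  map_smul' c x := dotProduct_smul c w x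

/-- if `ker(M - I) = span{v}` with `v ≠ 0`, and `w` is a left
nullvector of `M - I` normalized by `wᵀ v = 1`, then `Γ = M - I` maps
`Im Q = {x : wᵀ x = 0}` bijectively onto itself. -/
theorem gamma_bijective_on_image {n : ℕ}
    (M : Matrix (Fin n) (Fin n) ℝ) (v w : Fin n → ℝ) (hv0 : v ≠ 0)
    (hker : ∀ x : Fin n → ℝ, (M - 1) *ᵥ x = 0 ↔ ∃ c : ℝ, x = c • v)
    (hw : w ᵥ* (M - 1) = 0) (hn : w ⬝ᵥ v = 1) :
    (∀ x : Fin n → ℝ, w ⬝ᵥ x = 0 → w ⬝ᵥ ((M - 1) *ᵥ x) = 0) ∧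
    (∀ x : Fin n → ℝ, w ⬝ᵥ x = 0 → (M - 1) *ᵥ x = 0 → x = 0) ∧
    (∀ y : Fin n → ℝ, w ⬝ᵥ y = 0 →
      ∃ x : Fin n → ℝ, w ⬝ᵥ x = 0 ∧ (M - 1) *ᵥ x = y) := by
  have hdot : ∀ x : Fin n → ℝ, w ⬝ᵥ ((M - 1) *ᵥ x) = 0 := by
    intro x
    rw [dotProduct_mulVec, hw, zero_dotProduct]
  have hΓv : (M - 1) *ᵥ v = 0 := (hker v).mpr ⟨1, (one_smul _ _).symm⟩
  refine ⟨fun x _ => hdot x, ?_, ?_⟩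
  · intro x hx hΓ
    obtain ⟨c, rfl⟩ := (hker x).mp hΓ
    rw [dotProduct_smul, hn, smul_eq_mul, mul_one] at hx
    rw [hx, zero_smul]
  · -- surjectivity via rank-nullity
    set f := Matrix.mulVecLin (M - 1) with hf
    set g := wlin w with hg
    have hgapp : ∀ x, g x = w ⬝ᵥ x := fun x => rfl
    have hkerf : LinearMap.ker f = ℝ ∙ v := by
      ext x
      simp only [LinearMap.mem_ker, hf, Matrix.mulVecLin_apply, Submodule.mem_span_singleton]
      rw [hker x]
      constructor
      · rintro ⟨c, rfl⟩; exact ⟨c, rfl⟩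
      · rintro ⟨c, rfl⟩; exact ⟨c, rfl⟩
    have hrangg : LinearMap.range g = ⊤ := by
      rw [eq_top_iff]
      intro c _
      refine ⟨c • v, ?_⟩
      rw [hgapp, dotProduct_smul, hn, smul_eq_mul, mul_one]
    have hfinkf : Module.finrank ℝ (LinearMap.ker f) = 1 := by
      rw [hkerf]; exact finrank_span_singleton hv0
    have hrn1 := LinearMap.finrank_range_add_finrank_ker f
    have hrn2 := LinearMap.finrank_range_add_finrank_ker g
    rw [hrangg, finrank_top, Module.finrank_self] at hrn2
    rw [hfinkf] at hrn1
    rw [Module.finrank_fintype_fun_eq_card, Fintype.card_fin] at hrn1 hrn2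
    have hle : LinearMap.range f ≤ LinearMap.ker g := by
      rintro y ⟨x, rfl⟩
      exact hdot x
    have heq : LinearMap.range f = LinearMap.ker g := by
      apply Submodule.eq_of_le_of_finrank_le hle
      omega
    intro y hy
    have hymem : y ∈ LinearMap.range f := by
      rw [heq]; exact hy
    obtain ⟨x', hx'⟩ := hymem
    refine ⟨x' - (w ⬝ᵥ x') • v, ?_, ?_⟩
    · rw [dotProduct_sub, dotProduct_smul, hn, smul_eq_mul, mul_one, sub_self]
    · rw [mulVec_sub, mulVec_smul, hΓv, smul_zero, sub_zero]
      exact hx'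
end

section
/- Uniqueness of the adjoint solution: under the hyperbolicity hypotheses (ker(X(1)-I) = span{f(γ(0))}, w the unique left nullvector of X(1)-I with wᵀ f(γ(0)) = 1), the function λ(t) := X(t)⁻ᵀ w is the unique solution of the boundary-value problem μ'ᵀ = -T μᵀ Df(γ), μ(0) = μ(1), ∫₀¹ μ(t)ᵀ f(γ(t)) dt = 1. -/
/-!
The adjoint equation `μ' = -Aᵀ μ` is built so that `μ ⬝ᵥ v` is constant along every solution of
the variational equation `v' = A v`, `A = T • Df(γ)`. Pairing `μ` with the columns of `X` gives
`μ(t)ᵀ X(t) = μ(0)ᵀ`, so periodicity makes `μ(0)` a left fixed vector of the monodromy `X(1)`;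
pairing `μ` with `f(γ)` shows the normalisation integral equals `μ(0) ⬝ᵥ f(γ(0))`. Since the range
of `X(1) - 1` together with `f(γ(0))` spans everything, a left fixed vector of `X(1)` is determined
by its pairing with `f(γ(0))`, hence `μ(0) = w` and `μ(t) = X(t)⁻ᵀ w`.
-/

open Matrix

attribute [local instance] Matrix.normedAddCommGroup Matrix.normedSpace

section Calculus

variable {𝕜 : Type*} [NontriviallyNormedField 𝕜] {m ι : Type*} [Fintype ι]

theorem HasDerivAt.dotProduct {u v : 𝕜 → ι → 𝕜} {u' v' : ι → 𝕜} {t : 𝕜}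
    (hu : HasDerivAt u u' t) (hv : HasDerivAt v v' t) :
    HasDerivAt (fun s => u s ⬝ᵥ v s) (u' ⬝ᵥ v t + u t ⬝ᵥ v') t := by
  show HasDerivAt (fun s => ∑ i, u s i * v s i) (∑ i, u' i * v t i + ∑ i, u t i * v' i) t
  rw [← Finset.sum_add_distrib]
  exact HasDerivAt.fun_sum fun i _ => (hasDerivAt_pi.mp hu i).mul (hasDerivAt_pi.mp hv i)

theorem HasDerivAt.mulVec_const {A : 𝕜 → Matrix m ι 𝕜} {A' : Matrix m ι 𝕜} {t : 𝕜}
    (hA : HasDerivAt A A' t) (x : ι → 𝕜) :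
    HasDerivAt (fun s => A s *ᵥ x) (A' *ᵥ x) t := by
  refine hasDerivAt_pi.mpr fun i => ?_
  simpa [mulVec] using (hasDerivAt_pi.mp hA i).dotProduct (hasDerivAt_const t x)

end Calculus

theorem dotProduct_eq_of_hasDerivAt_adjoint {𝕜 ι : Type*} [RCLike 𝕜] [Fintype ι]
    {A : 𝕜 → Matrix ι ι 𝕜} {u v : 𝕜 → ι → 𝕜}
    (hu : ∀ t, HasDerivAt u (-((A t)ᵀ *ᵥ u t)) t) (hv : ∀ t, HasDerivAt v (A t *ᵥ v t) t)
    (s t : 𝕜) : u s ⬝ᵥ v s = u t ⬝ᵥ v t := by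
  have hderiv : ∀ t, HasDerivAt (fun s => u s ⬝ᵥ v s) 0 t := fun t => by
    simpa [neg_dotProduct, dotProduct_mulVec, mulVec_transpose] using (hu t).dotProduct (hv t)
  exact is_const_of_deriv_eq_zero (fun t => (hderiv t).differentiableAt)
    (fun t => (hderiv t).deriv) s t

theorem eq_of_vecMul_eq_self_of_dotProduct_eq {R ι : Type*} [CommRing R] [Fintype ι]
    [DecidableEq ι] {M : Matrix ι ι R} {u w p : ι → R}
    (hrange : ∀ y, w ⬝ᵥ y = 0 → ∃ x, (M - 1) *ᵥ x = y)
    (hu : u ᵥ* M = u) (hw : w ᵥ* M = w) (hup : u ⬝ᵥ p = 1) (hwp : w ⬝ᵥ p = 1) : u = w := by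
  have hnull : (u - w) ᵥ* (M - 1) = 0 := by
    rw [vecMul_sub, sub_vecMul, sub_vecMul, hu, hw, vecMul_one, vecMul_one]
    abel
  refine sub_eq_zero.mp (dotProduct_eq_zero _ fun z => ?_)
  -- split `z` along `range (M - 1) ⊕ span {p}`, both of which `u - w` annihilates
  obtain ⟨x, hx⟩ := hrange (z - (w ⬝ᵥ z) • p) (by simp [dotProduct_sub, hwp])
  have hz : z = (M - 1) *ᵥ x + (w ⬝ᵥ z) • p := by rw [hx]; abel
  rw [hz, dotProduct_add, dotProduct_mulVec, hnull, zero_dotProduct, dotProduct_smul,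
    sub_dotProduct, hup, hwp, sub_self, smul_zero, add_zero]

theorem adjoint_bvp_unique_solution_general {n : ℕ} (T : ℝ)
    (f : (Fin n → ℝ) → (Fin n → ℝ)) (Df : (Fin n → ℝ) → Matrix (Fin n) (Fin n) ℝ)
    (hDf : ∀ x, HasFDerivAt f ((Df x).mulVecLin.toContinuousLinearMap) x)
    (γ : ℝ → Fin n → ℝ) (hγ : ∀ t, HasDerivAt γ (T • f (γ t)) t)
    (X : ℝ → Matrix (Fin n) (Fin n) ℝ)
    (hX : ∀ t, HasDerivAt X (T • (Df (γ t) * X t)) t)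
    (hX0 : X 0 = 1) (hXinv : ∀ t, IsUnit (X t))
    (w : Fin n → ℝ)
    (hw : w ᵥ* X 1 = w) (hwn : w ⬝ᵥ f (γ 0) = 1)
    (hsurj : ∀ y : Fin n → ℝ, w ⬝ᵥ y = 0 →
      ∃ x : Fin n → ℝ, w ⬝ᵥ x = 0 ∧ (X 1 - 1) *ᵥ x = y)
    (μ : ℝ → Fin n → ℝ)
    (hμ : ∀ t, HasDerivAt μ (-(T • ((Df (γ t))ᵀ *ᵥ μ t))) t)
    (hμper : μ 0 = μ 1)
    (hint : (∫ t in (0:ℝ)..1, μ t ⬝ᵥ f (γ t)) = 1) :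
    ∀ t : ℝ, μ t = ((X t)⁻¹)ᵀ *ᵥ w := by
  have hμ' : ∀ t, HasDerivAt μ (-((T • Df (γ t))ᵀ *ᵥ μ t)) t := by
    simpa [transpose_smul, smul_mulVec] using hμ
  have hfγ : ∀ t, HasDerivAt (fun s => f (γ s)) ((T • Df (γ t)) *ᵥ f (γ t)) t := fun t => by
    simpa [Function.comp_def, smul_mulVec, mulVec_smul] using
      (hDf (γ t)).comp_hasDerivAt t (hγ t)
  have hXx : ∀ x t, HasDerivAt (fun s => X s *ᵥ x) ((T • Df (γ t)) *ᵥ (X t *ᵥ x)) t :=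
    fun x t => by simpa [mulVec_mulVec, smul_mul_assoc] using (hX t).mulVec_const x
  have hμX : ∀ t, μ t ᵥ* X t = μ 0 := fun t => sub_eq_zero.mp <| dotProduct_eq_zero _ fun x => by
    rw [sub_dotProduct, ← dotProduct_mulVec,
      dotProduct_eq_of_hasDerivAt_adjoint hμ' (hXx x) t 0, hX0, one_mulVec, sub_self]
  have hμf : μ 0 ⬝ᵥ f (γ 0) = 1 := by
    rw [← hint, intervalIntegral.integral_congr (g := fun _ => μ 0 ⬝ᵥ f (γ 0))
      fun t _ => dotProduct_eq_of_hasDerivAt_adjoint hμ' hfγ t 0]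
    simp
  have hμ0 : μ 0 = w := eq_of_vecMul_eq_self_of_dotProduct_eq
    (fun y hy => (hsurj y hy).imp fun _ => And.right) (by simpa only [← hμper] using hμX 1)
    hw hμf hwn
  intro t
  rw [mulVec_transpose, ← hμ0, ← hμX t, vecMul_vecMul,
    mul_nonsing_inv _ ((isUnit_iff_isUnit_det _).mp (hXinv t)), vecMul_one]

/-- under the hyperbolicity hypotheses on the monodromy matrix,
`λ(t) := X(t)⁻ᵀ w` is the unique solution of the adjoint boundary-value problem
`μ'ᵀ = -T μᵀ Df(γ)`, `μ(0) = μ(1)`, `∫₀¹ μᵀ f(γ) dt = 1`. -/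
theorem adjoint_bvp_unique_solution {n : ℕ} (T : ℝ) (hT : 0 < T)
    (f : (Fin n → ℝ) → (Fin n → ℝ)) (Df : (Fin n → ℝ) → Matrix (Fin n) (Fin n) ℝ)
    (hf : ContDiff ℝ 1 f)
    (hDf : ∀ x, HasFDerivAt f ((Df x).mulVecLin.toContinuousLinearMap) x)
    (γ : ℝ → Fin n → ℝ) (hγ : ∀ t, HasDerivAt γ (T • f (γ t)) t)
    (hper : ∀ t, γ (t + 1) = γ t)
    (X : ℝ → Matrix (Fin n) (Fin n) ℝ)
    (hX : ∀ t, HasDerivAt X (T • (Df (γ t) * X t)) t)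
    (hX0 : X 0 = 1) (hXinv : ∀ t, IsUnit (X t))
    (w : Fin n → ℝ)
    (hker : ∀ x : Fin n → ℝ, (X 1 - 1) *ᵥ x = 0 ↔ ∃ c : ℝ, x = c • f (γ 0))
    (hw : w ᵥ* X 1 = w) (hwn : w ⬝ᵥ f (γ 0) = 1)
    (hsurj : ∀ y : Fin n → ℝ, w ⬝ᵥ y = 0 →
      ∃ x : Fin n → ℝ, w ⬝ᵥ x = 0 ∧ (X 1 - 1) *ᵥ x = y)
    (μ : ℝ → Fin n → ℝ)
    (hμ : ∀ t, HasDerivAt μ (-(T • ((Df (γ t))ᵀ *ᵥ μ t))) t)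
    (hμper : μ 0 = μ 1)
    (hint : (∫ t in (0:ℝ)..1, μ t ⬝ᵥ f (γ t)) = 1) :
    ∀ t : ℝ, μ t = ((X t)⁻¹)ᵀ *ᵥ w :=
  adjoint_bvp_unique_solution_general T f Df hDf γ hγ X hX hX0 hXinv w hw hwn hsurj μ hμ hμper hint
end

section
/- The projection family Q(t) := X(t)(I - f(γ(0)) wᵀ) X(t)⁻¹ is the unique 1-periodic family of rank-(n-1) projections satisfying the invariance X(t) P(0) = P(t) X(t) for all t and such that Γ(t) := X(t)(X(1)-I)X(t)⁻¹ is a bijection on Im P(t). (Uniqueness at t = 0: any projection P = I - φ μᵀ with μᵀ φ = 1, commuting appropriately with the monodromy and with X(1)-I bijective on Im P, must have φ ∈ span{f(γ(0))} and μ ∈ span{w}.) -/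
/-!
Write `P = 1 - φ μ₀ᵀ`. Since `P` commutes with `M`, it maps the fixed vector `v` to a fixed vector
in `ker μ₀ᵀ = Im P`, which must vanish because `M - 1` is injective there; so `v ∈ span{φ}`.
Dually, a left fixed vector `w` of `M` annihilates `Im (M - 1) ⊇ ker μ₀ᵀ`, so `w ∈ span{μ₀}`.
The normalization `wᵀ v = 1` then fixes the two scalars as reciprocals of each other.
-/

open Matrix

namespace Matrix

variable {ι R : Type*} [Fintype ι] [CommRing R]

theorem one_sub_vecMulVec_mulVec [DecidableEq ι] (φ μ x : ι → R) :
    (1 - vecMulVec φ μ) *ᵥ x = x - (μ ⬝ᵥ x) • φ := by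
  rw [sub_mulVec, one_mulVec, vecMulVec_mulVec, op_smul_eq_smul]

theorem dotProduct_one_sub_vecMulVec_mulVec [DecidableEq ι] {φ μ : ι → R} (hμφ : μ ⬝ᵥ φ = 1)
    (x : ι → R) : μ ⬝ᵥ ((1 - vecMulVec φ μ) *ᵥ x) = 0 := by
  rw [one_sub_vecMulVec_mulVec, dotProduct_sub, dotProduct_smul, hμφ, smul_eq_mul, mul_one,
    sub_self]

theorem eq_dotProduct_smul_of_forall_dotProduct_eq_zero {φ μ u : ι → R} (hμφ : μ ⬝ᵥ φ = 1)
    (hu : ∀ x, μ ⬝ᵥ x = 0 → u ⬝ᵥ x = 0) : u = (u ⬝ᵥ φ) • μ := by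
  classical
  refine dotProduct_eq _ _ fun x => ?_
  have hx : u ⬝ᵥ (x - (μ ⬝ᵥ x) • φ) = 0 :=
    hu _ (by rw [← one_sub_vecMulVec_mulVec]; exact dotProduct_one_sub_vecMulVec_mulVec hμφ x)
  rw [dotProduct_sub, dotProduct_smul, sub_eq_zero] at hx
  rw [hx, smul_dotProduct, smul_eq_mul, smul_eq_mul, mul_comm]

theorem dotProduct_sub_one_mulVec_eq_zero [DecidableEq ι] {M : Matrix ι ι R} {u : ι → R}
    (hu : u ᵥ* M = u) (x : ι → R) : u ⬝ᵥ ((M - 1) *ᵥ x) = 0 := by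
  rw [dotProduct_mulVec, vecMul_sub, hu, vecMul_one, sub_self, zero_dotProduct]

theorem eq_dotProduct_smul_of_vecMul_eq_self [DecidableEq ι] {M : Matrix ι ι R}
    {φ μ u : ι → R} (hμφ : μ ⬝ᵥ φ = 1) (hu : u ᵥ* M = u)
    (hsurj : ∀ y, μ ⬝ᵥ y = 0 → ∃ x, μ ⬝ᵥ x = 0 ∧ (M - 1) *ᵥ x = y) :
    u = (u ⬝ᵥ φ) • μ := by
  refine eq_dotProduct_smul_of_forall_dotProduct_eq_zero hμφ fun y hy => ?_
  obtain ⟨x, -, rfl⟩ := hsurj y hy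
  exact dotProduct_sub_one_mulVec_eq_zero hu x

theorem eq_dotProduct_smul_of_mulVec_eq_self [DecidableEq ι] {M : Matrix ι ι R}
    {φ μ v : ι → R} (hμφ : μ ⬝ᵥ φ = 1) (hcomm : M * (1 - vecMulVec φ μ) = (1 - vecMulVec φ μ) * M)
    (hv : M *ᵥ v = v) (hinj : ∀ x, μ ⬝ᵥ x = 0 → (M - 1) *ᵥ x = 0 → x = 0) :
    v = (μ ⬝ᵥ v) • φ := by
  set P := 1 - vecMulVec φ μ
  have hfixed : M *ᵥ (P *ᵥ v) = P *ᵥ v := by rw [mulVec_mulVec, hcomm, ← mulVec_mulVec, hv]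
  have hPv : P *ᵥ v = 0 :=
    hinj _ (dotProduct_one_sub_vecMulVec_mulVec hμφ v) (by rw [sub_mulVec, one_mulVec, hfixed,
      sub_self])
  rwa [one_sub_vecMulVec_mulVec, sub_eq_zero] at hPv

end Matrix

theorem projection_family_unique_general {n : ℕ}
    (M : Matrix (Fin n) (Fin n) ℝ) (v w : Fin n → ℝ)
    (hv : M *ᵥ v = v) (hw : w ᵥ* M = w) (hn : w ⬝ᵥ v = 1)
    (φ μ₀ : Fin n → ℝ) (hnorm : μ₀ ⬝ᵥ φ = 1)
    (P : Matrix (Fin n) (Fin n) ℝ) (hP : P = 1 - vecMulVec φ μ₀)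
    (hinvar : M * P = P * M)
    (hinj : ∀ x : Fin n → ℝ, μ₀ ⬝ᵥ x = 0 → (M - 1) *ᵥ x = 0 → x = 0)
    (hsurjP : ∀ y : Fin n → ℝ, μ₀ ⬝ᵥ y = 0 →
      ∃ x : Fin n → ℝ, μ₀ ⬝ᵥ x = 0 ∧ (M - 1) *ᵥ x = y) :
    ∃ c : ℝ, c ≠ 0 ∧ φ = c • v ∧ c • μ₀ = w := by
  subst hP
  have hvφ : v = (μ₀ ⬝ᵥ v) • φ := eq_dotProduct_smul_of_mulVec_eq_self hnorm hinvar hv hinj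
  have hwμ : w = (w ⬝ᵥ φ) • μ₀ := eq_dotProduct_smul_of_vecMul_eq_self hnorm hw hsurjP
  have hprod : (w ⬝ᵥ φ) * (μ₀ ⬝ᵥ v) = 1 := by
    calc (w ⬝ᵥ φ) * (μ₀ ⬝ᵥ v) = w ⬝ᵥ ((μ₀ ⬝ᵥ v) • φ) := by
          rw [dotProduct_smul, smul_eq_mul, mul_comm]
      _ = 1 := by rw [← hvφ, hn]
  refine ⟨w ⬝ᵥ φ, left_ne_zero_of_mul_eq_one hprod, ?_, hwμ.symm⟩
  rw [hvφ, smul_smul, hprod, one_smul]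

/-- uniqueness of the invariant projection family, at `t = 0`:
in the hyperbolic periodic-orbit setup with monodromy `M`, `M v = v`,
`wᵀ M = wᵀ`, `wᵀ v = 1` and `Γ := M - I` a bijection on `{x : wᵀ x = 0}`, any
rank-one-complement projection `P = I - φ μ₀ᵀ`, `μ₀ᵀ φ = 1`, commuting with `M`
and such that `Γ` is a bijection on `Im P = {x : μ₀ᵀ x = 0}`, must have
`φ ∈ span{v}` and `μ₀ ∈ span{w}` (with reciprocal normalization). -/
theorem projection_family_unique {n : ℕ}
    (M : Matrix (Fin n) (Fin n) ℝ) (v w : Fin n → ℝ) (hv0 : v ≠ 0)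
    (hv : M *ᵥ v = v) (hw : w ᵥ* M = w) (hn : w ⬝ᵥ v = 1)
    (hQsurj : ∀ y : Fin n → ℝ, w ⬝ᵥ y = 0 →
      ∃ x : Fin n → ℝ, w ⬝ᵥ x = 0 ∧ (M - 1) *ᵥ x = y)
    (φ μ₀ : Fin n → ℝ) (hnorm : μ₀ ⬝ᵥ φ = 1)
    (P : Matrix (Fin n) (Fin n) ℝ) (hP : P = 1 - vecMulVec φ μ₀)
    (hinvar : M * P = P * M)
    (hinj : ∀ x : Fin n → ℝ, μ₀ ⬝ᵥ x = 0 → (M - 1) *ᵥ x = 0 → x = 0)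
    (hsurjP : ∀ y : Fin n → ℝ, μ₀ ⬝ᵥ y = 0 →
      ∃ x : Fin n → ℝ, μ₀ ⬝ᵥ x = 0 ∧ (M - 1) *ᵥ x = y) :
    ∃ c : ℝ, c ≠ 0 ∧ φ = c • v ∧ c • μ₀ = w :=
  projection_family_unique_general M v w hv hw hn φ μ₀ hnorm P hP hinvar hinj hsurjP
end

section
/- Uniqueness of the periodic covariance via vectorization: if no two eigenvalues of the monodromy matrix M := X(1) are reciprocals of each other (λᵢ λⱼ ≠ 1 for all eigenvalue pairs except the structural pair handled by the bordering), then the bordered linear system with matrix [[I_{n²} - M ⊗ M, v ⊗ v], [wᵀ ⊗ wᵀ, 0]] is invertible, where v := f(γ(0)) satisfies M v = v and w satisfies wᵀ M = wᵀ, wᵀ v = 1. -/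
open Matrix Filter
open scoped NNReal ENNReal

attribute [local instance] Matrix.linftyOpNormedRing Matrix.linftyOpNormedAlgebra

namespace BVLaux

variable {m : ℕ}

lemma eig_of_mem_spectrum (A : Matrix (Fin m) (Fin m) ℂ) {μ : ℂ} (h : μ ∈ spectrum ℂ A) :
    ∃ x : Fin m → ℂ, x ≠ 0 ∧ A *ᵥ x = μ • x := by
  rw [← AlgEquiv.spectrum_eq (Matrix.toLinAlgEquiv' (R := ℂ) (n := Fin m)),
    ← Module.End.hasEigenvalue_iff_mem_spectrum] at h
  obtain ⟨x, hx⟩ := h.exists_hasEigenvector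
  exact ⟨x, hx.2, hx.apply_eq_smul⟩

lemma mem_spectrum_of_eig (A : Matrix (Fin m) (Fin m) ℂ) {μ : ℂ} {x : Fin m → ℂ}
    (hx : x ≠ 0) (h : A *ᵥ x = μ • x) : μ ∈ spectrum ℂ A := by
  rw [← AlgEquiv.spectrum_eq (Matrix.toLinAlgEquiv' (R := ℂ) (n := Fin m)),
    ← Module.End.hasEigenvalue_iff_mem_spectrum]
  exact Module.End.hasEigenvalue_of_hasEigenvector ⟨Module.End.mem_eigenspace_iff.mpr (by simpa using h), hx⟩

lemma sr_lt_one (A : Matrix (Fin m) (Fin m) ℂ) (h : ∀ μ ∈ spectrum ℂ A, ‖μ‖ < 1) :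
    spectralRadius ℂ A < 1 := by
  have hfin : (spectrum ℂ A).Finite := Matrix.finite_spectrum A
  set T : Finset ℝ≥0 := hfin.toFinset.image (fun μ => ‖μ‖₊) with hT
  have hb : ∀ μ ∈ spectrum ℂ A, (‖μ‖₊ : ℝ≥0∞) ≤ (T.sup id : ℝ≥0) := by
    intro μ hμ
    exact_mod_cast ENNReal.coe_le_coe.mpr (Finset.le_sup (f := id) (by
      simp only [hT, Finset.mem_image, hfin.mem_toFinset]; exact ⟨μ, hμ, rfl⟩ : ‖μ‖₊ ∈ T))
  have hlt : (T.sup id : ℝ≥0) < 1 := by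
    apply Finset.sup_lt_iff (by norm_num : (0:ℝ≥0) < 1) |>.mpr
    intro b hb'
    simp only [hT, Finset.mem_image, hfin.mem_toFinset] at hb'
    obtain ⟨μ, hμ, rfl⟩ := hb'
    simpa [← NNReal.coe_lt_coe, coe_nnnorm] using h μ hμ
  calc spectralRadius ℂ A ≤ (T.sup id : ℝ≥0) := iSup₂_le hb
    _ < 1 := by exact_mod_cast hlt



lemma ev_pow_norm_lt_one (A : Matrix (Fin m) (Fin m) ℂ)
    (h : ∀ μ ∈ spectrum ℂ A, ‖μ‖ < 1) : ∀ᶠ k in atTop, ‖A ^ k‖ < 1 := by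
  have hρ := sr_lt_one A h
  have hg := spectrum.pow_nnnorm_pow_one_div_tendsto_nhds_spectralRadius A
  have hev : ∀ᶠ k : ℕ in atTop, (‖A ^ k‖₊ : ℝ≥0∞) ^ (1/(k:ℝ)) < 1 := hg.eventually_lt_const hρ
  filter_upwards [hev] with k hk
  by_contra hge
  push_neg at hge
  have h1 : (1:ℝ≥0∞) ≤ (‖A ^ k‖₊ : ℝ≥0∞) := by exact_mod_cast hge
  have h2 := ENNReal.rpow_le_rpow h1 (by positivity : (0:ℝ) ≤ 1/(k:ℝ))
  rw [ENNReal.one_rpow] at h2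
  exact absurd hk (not_lt.mpr h2)

lemma spectrum_transpose (A : Matrix (Fin m) (Fin m) ℂ) :
    spectrum ℂ Aᵀ = spectrum ℂ A := by
  ext μ
  have key : ∀ B : Matrix (Fin m) (Fin m) ℂ, IsUnit B ↔ IsUnit Bᵀ := by
    intro B
    rw [Matrix.isUnit_iff_isUnit_det, Matrix.isUnit_iff_isUnit_det, Matrix.det_transpose]
  rw [spectrum.mem_iff, spectrum.mem_iff, not_iff_not, key]
  congr! 1
  rw [Matrix.transpose_sub]
  congr 1
  simp [Matrix.algebraMap_eq_diagonal]

lemma fixed_matrix_zero (A : Matrix (Fin m) (Fin m) ℂ)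
    (h : ∀ μ ∈ spectrum ℂ A, ‖μ‖ < 1) (Z : Matrix (Fin m) (Fin m) ℂ)
    (hZ : A * Z * Aᵀ = Z) : Z = 0 := by
  have ht : ∀ μ ∈ spectrum ℂ Aᵀ, ‖μ‖ < 1 := by rw [spectrum_transpose]; exact h
  obtain ⟨k, hk1, hk2⟩ := ((ev_pow_norm_lt_one A h).and (ev_pow_norm_lt_one Aᵀ ht)).exists
  have hiter : ∀ j, A ^ j * Z * Aᵀ ^ j = Z := by
    intro j
    induction j with
    | zero => simp
    | succ i ih =>
      have e : A ^ (i+1) * Z * Aᵀ ^ (i+1) = A ^ i * (A * Z * Aᵀ) * Aᵀ ^ i := by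
        rw [pow_succ, pow_succ']
        noncomm_ring
      rw [e, hZ, ih]
  by_contra hne
  have hpos : 0 < ‖Z‖ := norm_pos_iff.mpr hne
  have hb : ‖Z‖ ≤ ‖A ^ k‖ * ‖Z‖ * ‖Aᵀ ^ k‖ := by
    conv_lhs => rw [← hiter k]
    calc ‖A ^ k * Z * Aᵀ ^ k‖ ≤ ‖A ^ k * Z‖ * ‖Aᵀ ^ k‖ := norm_mul_le _ _
      _ ≤ ‖A ^ k‖ * ‖Z‖ * ‖Aᵀ ^ k‖ :=
        mul_le_mul_of_nonneg_right (norm_mul_le _ _) (norm_nonneg _)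
  have h3 : ‖A ^ k‖ * ‖Z‖ < ‖Z‖ := by nlinarith
  have h4 : ‖A ^ k‖ * ‖Z‖ * ‖Aᵀ ^ k‖ ≤ ‖A ^ k‖ * ‖Z‖ :=
    mul_le_of_le_one_right (mul_nonneg (norm_nonneg _) (norm_nonneg _)) hk2.le
  linarith



variable {k : ℕ}

lemma vecMulVec_mulVec (a b u : Fin k → ℝ) : vecMulVec a b *ᵥ u = (b ⬝ᵥ u) • a := by
  funext i
  simp only [Matrix.vecMulVec_apply, Matrix.mulVec, dotProduct, Finset.mul_sum,
    Finset.sum_mul, Pi.smul_apply, smul_eq_mul]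
  exact Finset.sum_congr rfl fun t _ => by ring

lemma vecMul_vecMulVecC (a b c : Fin k → ℂ) : a ᵥ* vecMulVec b c = (a ⬝ᵥ b) • c := by
  funext j
  simp [Matrix.vecMulVec_apply, Matrix.vecMul, dotProduct, Finset.sum_mul, mul_assoc]

lemma vecMulVec_mulVecC (a b u : Fin k → ℂ) : vecMulVec a b *ᵥ u = (b ⬝ᵥ u) • a := by
  funext i
  simp only [Matrix.vecMulVec_apply, Matrix.mulVec, dotProduct, Finset.mul_sum,
    Finset.sum_mul, Pi.smul_apply, smul_eq_mul]
  exact Finset.sum_congr rfl fun t _ => by ring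

lemma vecMulVec_mul (a b : Fin k → ℝ) (C : Matrix (Fin k) (Fin k) ℝ) :
    vecMulVec a b * C = vecMulVec a (b ᵥ* C) := by
  ext i j
  simp [Matrix.vecMulVec_apply, Matrix.mul_apply, Matrix.vecMul, dotProduct,
    Finset.mul_sum, mul_assoc]

lemma mul_vecMulVec (a b : Fin k → ℝ) (C : Matrix (Fin k) (Fin k) ℝ) :
    C * vecMulVec a b = vecMulVec (C *ᵥ a) b := by
  ext i j
  simp only [Matrix.vecMulVec_apply, Matrix.mul_apply, Matrix.mulVec, dotProduct,
    Finset.sum_mul, Finset.mul_sum]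
  exact Finset.sum_congr rfl fun t _ => by ring

lemma transpose_vecMulVec (a b : Fin k → ℝ) : (vecMulVec a b)ᵀ = vecMulVec b a := by
  ext i j
  simp [Matrix.vecMulVec_apply, mul_comm]

lemma kron_mulVec (A B : Matrix (Fin k) (Fin k) ℝ) (x : Fin k × Fin k → ℝ) (p : Fin k × Fin k) :
    (kroneckerMap (· * ·) A B *ᵥ x) p = (A * (Matrix.of fun i j => x (i, j)) * Bᵀ) p.1 p.2 := by
  simp only [Matrix.mulVec, dotProduct, Matrix.mul_apply, Matrix.kroneckerMap_apply,
    Matrix.transpose_apply, Matrix.of_apply, Fintype.sum_prod_type, Finset.sum_mul,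
    Finset.mul_sum]
  rw [Finset.sum_comm]
  exact Finset.sum_congr rfl fun a _ => Finset.sum_congr rfl fun b _ => by ring

lemma vecMulVec_zero_right (a : Fin k → ℝ) : vecMulVec a (0 : Fin k → ℝ) = 0 := by
  ext i j; simp [Matrix.vecMulVec_apply]

lemma vecMulVec_zero_left (a : Fin k → ℝ) : vecMulVec (0 : Fin k → ℝ) a = 0 := by
  ext i j; simp [Matrix.vecMulVec_apply]

lemma map_mul_ofReal (A B : Matrix (Fin k) (Fin k) ℝ) :
    (A * B).map ((↑) : ℝ → ℂ) = A.map ((↑) : ℝ → ℂ) * B.map ((↑) : ℝ → ℂ) := by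
  ext i j
  simp only [Matrix.mul_apply, Matrix.map_apply]
  push_cast
  rfl

lemma map_transpose_ofReal (A : Matrix (Fin k) (Fin k) ℝ) :
    Aᵀ.map ((↑) : ℝ → ℂ) = (A.map ((↑) : ℝ → ℂ))ᵀ := by
  ext i j; simp [Matrix.map_apply]

end BVLaux

open BVLaux in
/-- if the monodromy matrix `M` has simple eigenvalue `1` with
right/left eigenvectors `v`, `w` (`wᵀ v = 1`) and all other (complex)
eigenvalues of modulus `< 1` (so no two eigenvalues are reciprocal apart from
the structural pair), then the bordered matrix
`[[I - M ⊗ M, v ⊗ v], [wᵀ ⊗ wᵀ, 0]]` of size `(n²+1) × (n²+1)` is invertible. -/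
theorem bordered_vectorized_lyapunov_invertible {n : ℕ}
    (M : Matrix (Fin n) (Fin n) ℝ) (v w : Fin n → ℝ)
    (hv : M *ᵥ v = v) (hw : w ᵥ* M = w) (hn : w ⬝ᵥ v = 1)
    (hspec : ∀ μ ∈ spectrum ℂ (M.map ((↑) : ℝ → ℂ)), μ = 1 ∨ ‖μ‖ < 1)
    (hsimple : ∀ x : Fin n → ℂ, (M.map ((↑) : ℝ → ℂ)) *ᵥ x = x →
      ∃ c : ℂ, x = c • fun i => (v i : ℂ)) :
    IsUnit (Matrix.fromBlocks
      (1 - kroneckerMap (· * ·) M M)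
      (Matrix.of fun (p : Fin n × Fin n) (_ : Unit) => v p.1 * v p.2)
      (Matrix.of fun (_ : Unit) (q : Fin n × Fin n) => w q.1 * w q.2)
      (0 : Matrix Unit Unit ℝ)) := by
  classical
  set M' : Matrix (Fin n) (Fin n) ℂ := M.map ((↑) : ℝ → ℂ) with hM'
  set v' : Fin n → ℂ := fun i => (v i : ℂ) with hv'def
  set w' : Fin n → ℂ := fun i => (w i : ℂ) with hw'def
  -- complexified facts
  have hMw : Mᵀ *ᵥ w = w := by rw [Matrix.mulVec_transpose, hw]
  have hw'M : w' ᵥ* M' = w' := by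
    funext j
    have h0 := congrArg Complex.ofReal (congr_fun hw j)
    simp only [Matrix.vecMul, dotProduct] at h0 ⊢
    push_cast at h0
    simp only [hM', hw'def, Matrix.map_apply]
    exact h0
  have hn' : w' ⬝ᵥ v' = 1 := by
    have h0 := congrArg Complex.ofReal hn
    simp only [dotProduct] at h0 ⊢
    push_cast at h0
    simp only [hw'def, hv'def]
    exact h0
  -- a real vector fixed by M is a multiple of v
  have real_fixed : ∀ u : Fin n → ℝ, M *ᵥ u = u → ∃ t : ℝ, u = t • v := by
    intro u hu
    have hu' : M' *ᵥ (fun i => (u i : ℂ)) = fun i => (u i : ℂ) := by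
      funext i
      have h1 := (RingHom.map_mulVec Complex.ofRealHom M u i).symm
      have h2 : (Complex.ofRealHom ∘ u) = fun i => (u i : ℂ) := rfl
      rw [h2] at h1
      rw [hu] at h1
      rw [hM']
      exact h1
    obtain ⟨c, hc⟩ := hsimple _ hu'
    refine ⟨c.re, funext fun i => ?_⟩
    have := congr_fun hc i
    simp only [Pi.smul_apply, smul_eq_mul, hv'def] at this
    have hre := congrArg Complex.re this
    simpa [Complex.mul_re] using hre
  -- spectrum of N' is inside the open unit disc
  set N : Matrix (Fin n) (Fin n) ℝ := M - vecMulVec v w with hN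
  set N' : Matrix (Fin n) (Fin n) ℂ := N.map ((↑) : ℝ → ℂ) with hN'
  have hN'eq : N' = M' - vecMulVec v' w' := by
    ext i j
    simp [hN', hN, hM', Matrix.map_apply, Matrix.vecMulVec_apply, hv'def, hw'def]
  have hw'N : w' ᵥ* N' = 0 := by
    rw [hN'eq, Matrix.vecMul_sub, hw'M, vecMul_vecMulVecC, hn', one_smul, sub_self]
  have hspecN : ∀ μ ∈ spectrum ℂ N', ‖μ‖ < 1 := by
    intro μ hμ
    obtain ⟨x, hx0, hx⟩ := eig_of_mem_spectrum N' hμ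
    have hμwx : μ * (w' ⬝ᵥ x) = 0 := by
      have h1 : w' ⬝ᵥ (N' *ᵥ x) = 0 := by
        rw [Matrix.dotProduct_mulVec, hw'N, zero_dotProduct]
      rw [hx] at h1
      simpa [dotProduct_smul] using h1
    by_cases hwx : w' ⬝ᵥ x = 0
    · have hMx : M' *ᵥ x = μ • x := by
        rw [hN'eq, Matrix.sub_mulVec, vecMulVec_mulVecC, hwx, zero_smul, sub_zero] at hx
        exact hx
      rcases hspec μ (mem_spectrum_of_eig M' hx0 hMx) with h1 | h1
      · exfalso
        subst h1
        rw [one_smul] at hMx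
        obtain ⟨c, hc⟩ := hsimple x hMx
        have hc0 : c ≠ 0 := by
          rintro rfl
          simp at hc
          exact hx0 hc
        apply hc0
        have : w' ⬝ᵥ x = c * (w' ⬝ᵥ v') := by
          rw [hc]
          simp [dotProduct, Finset.mul_sum]
          exact Finset.sum_congr rfl fun t _ => by ring
        rw [hwx, hn', mul_one] at this
        exact this.symm
      · exact h1
    · have : μ = 0 := by
        rcases mul_eq_zero.mp hμwx with h | h
        · exact h
        · exact absurd h hwx
      simp [this]
  rw [← Matrix.mulVec_injective_iff_isUnit]
  set B := Matrix.fromBlocks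
      (1 - kroneckerMap (· * ·) M M)
      (Matrix.of fun (p : Fin n × Fin n) (_ : Unit) => v p.1 * v p.2)
      (Matrix.of fun (_ : Unit) (q : Fin n × Fin n) => w q.1 * w q.2)
      (0 : Matrix Unit Unit ℝ) with hB
  have key : ∀ z : (Fin n × Fin n) ⊕ Unit → ℝ, B *ᵥ z = 0 → z = 0 := by
    intro z hz
    set x : Fin n × Fin n → ℝ := fun p => z (Sum.inl p) with hxdef
    set c : ℝ := z (Sum.inr ()) with hcdef
    have hzsplit : z = Sum.elim x (fun _ => c) := by
      funext j
      cases j with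
      | inl p => rfl
      | inr u => cases u; rfl
    rw [hzsplit, hB, Matrix.fromBlocks_mulVec] at hz
    have hz1 : (1 - kroneckerMap (· * ·) M M) *ᵥ x
        + (Matrix.of fun (p : Fin n × Fin n) (_ : Unit) => v p.1 * v p.2) *ᵥ (fun _ => c) = 0 :=
      funext fun p => congr_fun hz (Sum.inl p)
    have hz2 : (Matrix.of fun (_ : Unit) (q : Fin n × Fin n) => w q.1 * w q.2) *ᵥ x
        + (0 : Matrix Unit Unit ℝ) *ᵥ (fun _ => c) = 0 :=
      funext fun u => congr_fun hz (Sum.inr u)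
    set Y : Matrix (Fin n) (Fin n) ℝ := Matrix.of fun i j => x (i, j) with hYdef
    have hmat : ∀ i j, x (i, j) - (M * Y * Mᵀ) i j + v i * v j * c = 0 := by
      intro i j
      have h := congr_fun hz1 (i, j)
      rw [Pi.add_apply, Matrix.sub_mulVec, Matrix.one_mulVec, Pi.sub_apply,
        kron_mulVec M M x (i, j), ← hYdef] at h
      simpa [Matrix.mulVec, dotProduct] using h
    have hmatM : Y - M * Y * Mᵀ + c • vecMulVec v v = 0 := by
      ext i j
      simp only [Matrix.add_apply, Matrix.sub_apply, Matrix.smul_apply,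
        Matrix.vecMulVec_apply, Matrix.zero_apply, smul_eq_mul]
      have h2 : Y i j = x (i, j) := rfl
      rw [h2]
      linarith [hmat i j]
    have hwYw : w ⬝ᵥ (Y *ᵥ w) = 0 := by
      have h := congr_fun hz2 ()
      rw [Pi.add_apply, Matrix.zero_mulVec, Pi.zero_apply, add_zero] at h
      calc w ⬝ᵥ (Y *ᵥ w) = ∑ q : Fin n × Fin n, w q.1 * w q.2 * x q := by
            simp only [dotProduct, Matrix.mulVec, hYdef, Matrix.of_apply,
              Finset.mul_sum, Fintype.sum_prod_type]
            exact Finset.sum_congr rfl fun a _ => Finset.sum_congr rfl fun b _ => by ring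
        _ = 0 := by
            rw [← h]
            simp [Matrix.mulVec, dotProduct]
    have e1 : (M * Y * Mᵀ) *ᵥ w = M *ᵥ (Y *ᵥ w) := by
      rw [← Matrix.mulVec_mulVec, ← Matrix.mulVec_mulVec, hMw]
    have hc0 : c = 0 := by
      have hdot := congrArg (fun A : Matrix (Fin n) (Fin n) ℝ => w ⬝ᵥ (A *ᵥ w)) hmatM
      have e3 : w ⬝ᵥ (vecMulVec v v *ᵥ w) = 1 := by
        rw [vecMulVec_mulVec, dotProduct_smul, dotProduct_comm v w, hn]
        simp
      have e2 : w ⬝ᵥ (M *ᵥ (Y *ᵥ w)) = w ⬝ᵥ (Y *ᵥ w) := by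
        rw [Matrix.dotProduct_mulVec, hw]
      rw [Matrix.add_mulVec, Matrix.sub_mulVec, Matrix.smul_mulVec,
        dotProduct_add, dotProduct_sub, dotProduct_smul,
        Matrix.zero_mulVec, dotProduct_zero, e1, e2, e3] at hdot
      simpa [hwYw] using hdot
    have hfix : M * Y * Mᵀ = Y := by
      rw [hc0, zero_smul, add_zero, sub_eq_zero] at hmatM
      exact hmatM.symm
    have hYw : Y *ᵥ w = 0 := by
      have hfixv : M *ᵥ (Y *ᵥ w) = Y *ᵥ w := by rw [← e1, hfix]
      obtain ⟨t, ht⟩ := real_fixed _ hfixv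
      have ht0 : t = 0 := by
        have h2 : w ⬝ᵥ (Y *ᵥ w) = t * (w ⬝ᵥ v) := by
          rw [ht, dotProduct_smul]; rfl
        rw [hwYw, hn, mul_one] at h2
        exact h2.symm
      rw [ht, ht0, zero_smul]
    have hwY : w ᵥ* Y = 0 := by
      have hfixT : M * Yᵀ * Mᵀ = Yᵀ := by
        have h := congrArg Matrix.transpose hfix
        rw [Matrix.transpose_mul, Matrix.transpose_mul, Matrix.transpose_transpose,
          ← mul_assoc] at h
        exact h
      have e1T : (M * Yᵀ * Mᵀ) *ᵥ w = M *ᵥ (Yᵀ *ᵥ w) := by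
        rw [← Matrix.mulVec_mulVec, ← Matrix.mulVec_mulVec, hMw]
      have hfixv : M *ᵥ (Yᵀ *ᵥ w) = Yᵀ *ᵥ w := by rw [← e1T, hfixT]
      obtain ⟨t, ht⟩ := real_fixed _ hfixv
      have hdot2 : w ⬝ᵥ (Yᵀ *ᵥ w) = 0 := by
        rw [Matrix.mulVec_transpose, dotProduct_comm, ← Matrix.dotProduct_mulVec, hwYw]
      have ht0 : t = 0 := by
        have h2 : w ⬝ᵥ (Yᵀ *ᵥ w) = t * (w ⬝ᵥ v) := by
          rw [ht, dotProduct_smul]; rfl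
        rw [hdot2, hn, mul_one] at h2
        exact h2.symm
      rw [← Matrix.mulVec_transpose, ht, ht0, zero_smul]
    have hNfix : N * Y * Nᵀ = Y := by
      have hNT : Nᵀ = Mᵀ - vecMulVec w v := by
        rw [hN, Matrix.transpose_sub, transpose_vecMulVec]
      have hNY : N * Y = M * Y := by
        rw [hN, Matrix.sub_mul, vecMulVec_mul, hwY, vecMulVec_zero_right, sub_zero]
      have hMYw : (M * Y) *ᵥ w = 0 := by
        rw [← Matrix.mulVec_mulVec, hYw, Matrix.mulVec_zero]
      rw [hNY, hNT, Matrix.mul_sub, mul_vecMulVec, hMYw, vecMulVec_zero_left, sub_zero, hfix]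
    have hY'fix : N' * (Y.map ((↑) : ℝ → ℂ)) * N'ᵀ = Y.map ((↑) : ℝ → ℂ) := by
      have h := congrArg (fun A : Matrix (Fin n) (Fin n) ℝ => A.map ((↑) : ℝ → ℂ)) hNfix
      rw [map_mul_ofReal, map_mul_ofReal, map_transpose_ofReal] at h
      rw [hN']
      exact h
    have hY0 : Y.map ((↑) : ℝ → ℂ) = 0 := fixed_matrix_zero N' hspecN _ hY'fix
    have hYzero : Y = 0 := by
      ext i j
      have h := congr_fun (congr_fun hY0 i) j
      simpa [Matrix.map_apply] using h
    have hx0 : x = 0 := by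
      funext p
      have h : Y p.1 p.2 = 0 := by rw [hYzero]; rfl
      exact h
    rw [hzsplit, hx0, hc0]
    funext j
    cases j with
    | inl p => rfl
    | inr u => rfl
  intro z1 z2 h12
  have h := key (z1 - z2) (by rw [Matrix.mulVec_sub, h12, sub_self])
  exact sub_eq_zero.mp h
end
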